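/- For real x > 0 and y = 2x, the asymptotic relation ₂F₁(x,x;2x;r) ~ (Γ(2x)/Γ(x)²) log(1/(1−r)) holds as r → 1⁻. -/

import Mathlib

/-! The coefficients `(a)ₖ (b)ₖ / ((a + b)ₖ k!)` of `₂F₁(a, b; a + b; r)` are ratios of the
products in Euler's limit formula for `Γ`, which shows that `k` times them tends to
`Γ(a + b) / (Γ(a) Γ(b))`. So they are asymptotic to that constant times `1 / k`, the
coefficients of `log (1 / (1 - r))`. Equivalence of coefficients passes to the power series as
`r → 1⁻` because the comparison series diverges there, which makes any finite set of initial
terms negligible. -/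

open Real Filter

/-- The real Gauss hypergeometric function `₂F₁(a, b; c; x)`, defined by its power
series. -/
noncomputable def hyp2F1 (a b c x : ℝ) : ℝ :=
  ∑' k : ℕ, ((ascPochhammer ℝ k).eval a * (ascPochhammer ℝ k).eval b /
    ((ascPochhammer ℝ k).eval c * (k.factorial : ℝ))) * x ^ k

open Topology Asymptotics

theorem Asymptotics.IsLittleO.tsum_mul_pow_nhdsLT {d e : ℕ → ℝ} {E : ℝ → ℝ}
    (hde : d =o[atTop] e) (he : ∀ k, 0 ≤ e k)
    (hE : ∀ᶠ r in 𝓝[<] 1, HasSum (fun k => e k * r ^ k) (E r))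
    (hEtop : Tendsto E (𝓝[<] 1) atTop) :
    (fun r => ∑' k, d k * r ^ k) =o[𝓝[<] 1] E := by
  refine isLittleO_iff.2 fun c hc => ?_
  obtain ⟨N, hN⟩ := eventually_atTop.1 (hde.bound (half_pos hc))
  set C := ∑ k ∈ Finset.range N, |d k|
  have hbound : ∀ r ∈ Set.Ioo (0 : ℝ) 1, ∀ k,
      ‖d k * r ^ k‖ ≤ (if k < N then |d k| else 0) + c / 2 * (e k * r ^ k) := by
    intro r hr k
    have hrk : 0 ≤ r ^ k := pow_nonneg hr.1.le k
    rw [norm_mul, norm_pow, Real.norm_of_nonneg hr.1.le]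
    split_ifs with hk
    · calc ‖d k‖ * r ^ k ≤ |d k| :=
            mul_le_of_le_one_right (norm_nonneg _) (pow_le_one₀ hr.1.le hr.2.le)
        _ ≤ |d k| + c / 2 * (e k * r ^ k) :=
            le_add_of_nonneg_right (mul_nonneg (half_pos hc).le (mul_nonneg (he k) hrk))
    · have := hN k (not_lt.1 hk)
      rw [Real.norm_of_nonneg (he k)] at this
      nlinarith
  have hfinite : HasSum (fun k => if k < N then |d k| else 0) C := by
    have : HasSum (fun k => if k < N then |d k| else 0)
        (∑ k ∈ Finset.range N, if k < N then |d k| else 0) :=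
      hasSum_sum_of_ne_finset_zero fun k hk => if_neg (by simpa using hk)
    rwa [Finset.sum_congr rfl fun k hk => if_pos (Finset.mem_range.1 hk)] at this
  filter_upwards [Ioo_mem_nhdsLT one_pos, hE, hEtop.eventually_ge_atTop (2 * C / c)]
    with r hr hEr hCE
  have hE0 : 0 ≤ E r := hEr.nonneg fun k => mul_nonneg (he k) (pow_nonneg hr.1.le k)
  calc ‖∑' k, d k * r ^ k‖ ≤ C + c / 2 * E r :=
        tsum_of_norm_bounded (hfinite.add (hEr.mul_left (c / 2))) (hbound r hr)
    _ ≤ c * ‖E r‖ := by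
        rw [div_le_iff₀ hc] at hCE
        rw [Real.norm_of_nonneg hE0]
        linarith

theorem Asymptotics.IsEquivalent.tsum_mul_pow_nhdsLT {a e : ℕ → ℝ} {E : ℝ → ℝ}
    (hae : a ~[atTop] e) (he : ∀ k, 0 ≤ e k)
    (hE : ∀ᶠ r in 𝓝[<] 1, HasSum (fun k => e k * r ^ k) (E r))
    (hEtop : Tendsto E (𝓝[<] 1) atTop) :
    (fun r => ∑' k, a k * r ^ k) ~[𝓝[<] 1] E := by
  refine ((hae.isLittleO.tsum_mul_pow_nhdsLT he hE hEtop).congr' ?_ EventuallyEq.rfl).isEquivalent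
  filter_upwards [hE] with r hEr
  have ha : Summable fun k => a k * r ^ k :=
    summable_of_isBigO_nat hEr.summable (hae.isBigO.mul (isBigO_refl _ _))
  simp only [Pi.sub_apply, sub_mul]
  exact (ha.hasSum.sub hEr).tsum_eq

theorem hasSum_inv_natCast_mul_pow {r : ℝ} (hr : |r| < 1) :
    HasSum (fun k : ℕ => (k : ℝ)⁻¹ * r ^ k) (log (1 / (1 - r))) := by
  rw [← hasSum_nat_add_iff' 1]
  simpa [one_div, log_inv, div_eq_inv_mul] using hasSum_pow_div_log_of_abs_lt_one hr

theorem tendsto_log_one_div_one_sub_nhdsLT :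
    Tendsto (fun r : ℝ => log (1 / (1 - r))) (𝓝[<] 1) atTop := by
  have h : Tendsto (fun r : ℝ => 1 - r) (𝓝[<] 1) (𝓝[>] 0) := by
    refine tendsto_nhdsWithin_of_tendsto_nhds_of_eventually_within _ ?_ ?_
    · exact tendsto_nhdsWithin_of_tendsto_nhds
        (by simpa using (continuous_sub_left (1 : ℝ)).tendsto 1)
    · filter_upwards [self_mem_nhdsWithin] with r (hr : r < 1) using sub_pos.2 hr
  simpa only [one_div, Function.comp_def] using
    tendsto_log_atTop.comp (tendsto_inv_nhdsGT_zero.comp h)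

noncomputable def hyp2F1Coeff (a b c : ℝ) (k : ℕ) : ℝ :=
  (ascPochhammer ℝ k).eval a * (ascPochhammer ℝ k).eval b /
    ((ascPochhammer ℝ k).eval c * (k.factorial : ℝ))

theorem hyp2F1_eq_tsum (a b c x : ℝ) : hyp2F1 a b c x = ∑' k, hyp2F1Coeff a b c k * x ^ k :=
  rfl

theorem ascPochhammer_eval_eq_prod_range {S : Type*} [CommSemiring S] (s : S) :
    ∀ n : ℕ, (ascPochhammer S n).eval s = ∏ j ∈ Finset.range n, (s + j)
  | 0 => by simp
  | n + 1 => by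
    rw [ascPochhammer_succ_eval, Finset.prod_range_succ, ascPochhammer_eval_eq_prod_range s n]

theorem GammaSeq_add_div_GammaSeq_mul_GammaSeq {a b : ℝ} (ha : 0 < a) (hb : 0 < b) {n : ℕ}
    (hn : n ≠ 0) :
    GammaSeq (a + b) n / (GammaSeq a n * GammaSeq b n) =
      (n + 1 : ℕ) * hyp2F1Coeff a b (a + b) (n + 1) := by
  have hn : (0 : ℝ) < n := Nat.cast_pos.2 (Nat.pos_of_ne_zero hn)
  have hprod : ∀ s : ℝ, 0 < s → (0 : ℝ) < ∏ j ∈ Finset.range (n + 1), (s + j) :=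
    fun s hs => Finset.prod_pos fun j _ => by positivity
  have := hprod a ha
  have := hprod b hb
  have := hprod (a + b) (by positivity)
  have := rpow_pos_of_pos hn a
  have := rpow_pos_of_pos hn b
  simp only [GammaSeq, hyp2F1Coeff, ascPochhammer_eval_eq_prod_range, rpow_add hn,
    Nat.factorial_succ]
  push_cast
  field_simp

theorem tendsto_natCast_mul_hyp2F1Coeff {a b : ℝ} (ha : 0 < a) (hb : 0 < b) :
    Tendsto (fun k : ℕ => (k : ℝ) * hyp2F1Coeff a b (a + b) k) atTop
      (𝓝 (Gamma (a + b) / (Gamma a * Gamma b))) := by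
  rw [← tendsto_add_atTop_iff_nat 1]
  refine ((GammaSeq_tendsto_Gamma _).div ((GammaSeq_tendsto_Gamma a).mul
    (GammaSeq_tendsto_Gamma b))
    (mul_ne_zero (Gamma_pos_of_pos ha).ne' (Gamma_pos_of_pos hb).ne')).congr' ?_
  filter_upwards [eventually_ne_atTop 0] with n hn
  exact GammaSeq_add_div_GammaSeq_mul_GammaSeq ha hb hn

theorem Gamma_add_div_Gamma_mul_Gamma_pos {a b : ℝ} (ha : 0 < a) (hb : 0 < b) :
    0 < Gamma (a + b) / (Gamma a * Gamma b) :=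
  div_pos (Gamma_pos_of_pos (add_pos ha hb)) (mul_pos (Gamma_pos_of_pos ha) (Gamma_pos_of_pos hb))

theorem hyp2F1Coeff_isEquivalent {a b : ℝ} (ha : 0 < a) (hb : 0 < b) :
    hyp2F1Coeff a b (a + b) ~[atTop]
      fun k => Gamma (a + b) / (Gamma a * Gamma b) * (k : ℝ)⁻¹ := by
  refine isEquivalent_of_tendsto_one ?_
  have hl := Gamma_add_div_Gamma_mul_Gamma_pos ha hb
  have h := (tendsto_natCast_mul_hyp2F1Coeff ha hb).div_const (Gamma (a + b) / (Gamma a * Gamma b))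
  rw [div_self hl.ne'] at h
  refine h.congr' ?_
  filter_upwards [eventually_ne_atTop 0] with k hk
  simp only [Pi.div_apply]
  field_simp

theorem hyp2F1_isEquivalent_log {a b : ℝ} (ha : 0 < a) (hb : 0 < b) :
    (fun r => hyp2F1 a b (a + b) r) ~[𝓝[<] 1]
      fun r => Gamma (a + b) / (Gamma a * Gamma b) * log (1 / (1 - r)) := by
  have hl := Gamma_add_div_Gamma_mul_Gamma_pos ha hb
  simp only [hyp2F1_eq_tsum]
  refine (hyp2F1Coeff_isEquivalent ha hb).tsum_mul_pow_nhdsLT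
    (fun k => mul_nonneg hl.le (by positivity)) ?_
    (tendsto_log_one_div_one_sub_nhdsLT.const_mul_atTop hl)
  filter_upwards [Ioo_mem_nhdsLT (show (-1 : ℝ) < 1 by norm_num)] with r hr
  simpa only [mul_assoc] using (hasSum_inv_natCast_mul_pow (abs_lt.2 hr)).mul_left _

/-- For `x > 0`, `₂F₁(x, x; 2x; r) ~ (Γ(2x)/Γ(x)²) log (1/(1-r))` as `r → 1⁻`. -/
theorem hyp2F1_asymp_log (x : ℝ) (hx : 0 < x) :
    Tendsto
      (fun r : ℝ => hyp2F1 x x (2 * x) r /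
        ((Real.Gamma (2 * x) / (Real.Gamma x) ^ 2) * Real.log (1 / (1 - r))))
      (nhdsWithin 1 (Set.Iio 1)) (nhds 1) := by
  have hl := Gamma_add_div_Gamma_mul_Gamma_pos hx hx
  have h := hyp2F1_isEquivalent_log hx hx
  rw [← two_mul, ← sq] at hl h
  refine (isEquivalent_iff_tendsto_one ?_).1 h
  filter_upwards [(tendsto_log_one_div_one_sub_nhdsLT.const_mul_atTop hl).eventually_gt_atTop 0]
    with r hr using hr.ne'
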